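/- For every finite word w, D_∞(w) ≤ D(w^(+) w^(+)), where D_∞(w) is the minimum defect over infinite words over Alph(w) containing w. -/

import Mathlib

open List

variable {A : Type*}

/-- All factors (contiguous subwords) of a word, as a list. -/
def Factors (w : List A) : List (List A) := w.tails.flatMap List.inits

/-- The set of distinct palindromic factors of `w` (including the empty word). -/
def palFactors [DecidableEq A] (w : List A) : Finset (List A) :=
  ((Factors w).filter (fun u => decide (u.reverse = u))).toFinset

/-- A word is rich if it has exactly `|w| + 1` distinct palindromic factors. -/
def IsRich [DecidableEq A] (w : List A) : Prop :=
  (palFactors w).card = w.length + 1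

/-- The defect of a finite word. -/
def defect [DecidableEq A] (w : List A) : ℕ :=
  w.length + 1 - (palFactors w).card

/-- `u` is a (finite) factor of the infinite word `z`. -/
def FactorOfInf (u : List A) (z : ℕ → A) : Prop :=
  ∃ i, u = (List.range u.length).map (fun k => z (i + k))

/-- An infinite word is rich if all of its finite factors are rich. -/
def InfRich [DecidableEq A] (z : ℕ → A) : Prop :=
  ∀ u : List A, FactorOfInf u z → IsRich u

/-- The longest palindromic suffix of `w`. -/
def lps [DecidableEq A] (w : List A) : List A :=
  (w.tails.find? (fun u => decide (u.reverse = u))).getD []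

/-- The number of occurrences of `u` as a factor of `w` (counted by position). -/
def occCount [DecidableEq A] (u w : List A) : ℕ :=
  w.tails.countP (fun t => decide (u <+: t))

/-- The periodic infinite word `u^∞`. -/
def periodicWord (u : List A) (hu : u ≠ []) : ℕ → A :=
  fun i => u.get ⟨i % u.length, Nat.mod_lt _ (List.length_pos_iff.mpr hu)⟩

/-!
Take `z = p^∞`. Its least period `L` divides `|p|`, and since `p` is a palindrome so is the
length-`L` root of `z`. For `m ≥ 2L`, the suffix of `z[0, m]` starting at `L - 1 - m % L` is
then a palindrome of length at least `L`, and it cannot occur earlier without giving `z` a period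
smaller than `L`. So appending a letter never raises the defect of a prefix beyond length
`2L ≤ 2|p|`, and every factor has defect at most `D(z[0, 2|p|)) = D(pp)`. The letters of `p` are
letters of `w` because the minimality of `p` gives `|p| ≤ 2|w|`, so `p` is covered by its prefix
`w` and its suffix `w.reverse`.
-/

open Function

section PalindromicFactors

lemma mem_factors_iff {w u : List A} : u ∈ Factors w ↔ u <:+: w := by
  simp only [Factors, mem_flatMap, mem_tails, mem_inits, infix_iff_prefix_suffix]
  tauto

lemma isSuffix_of_isInfix_append_singleton {x u : List A} {a : A} (h : u <:+: x ++ [a])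
    (hx : ¬ u <:+: x) : u <:+ x ++ [a] := by
  obtain ⟨s, t, hst⟩ := h
  rcases eq_nil_or_concat t with rfl | ⟨t', b, rfl⟩
  · exact ⟨s, by simpa using hst⟩
  · rw [concat_eq_append, ← append_assoc] at hst
    exact absurd ⟨s, t', (append_inj' hst rfl).1⟩ hx

lemma isInfix_of_isPrefix_of_isSuffix_append_singleton {x u v : List A} {a : A}
    (huv : u <+: v) (hlt : u.length < v.length) (hv : v <:+ x ++ [a]) : u <:+: x := by
  have hu : u <+: v.dropLast :=
    prefix_of_prefix_length_le huv (dropLast_prefix v) (by simp; omega)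
  obtain ⟨l, hl⟩ := hv
  have hv' : v.dropLast <:+ x := ⟨l, by
    rw [← dropLast_append_of_ne_nil (ne_nil_of_length_pos (by omega)), hl, dropLast_concat]⟩
  exact hu.isInfix.trans hv'.isInfix

variable [DecidableEq A]

lemma mem_palFactors {w u : List A} : u ∈ palFactors w ↔ u.reverse = u ∧ u <:+: w := by
  simp only [palFactors, mem_toFinset, mem_filter, mem_factors_iff, decide_eq_true_eq]
  tauto

lemma palFactors_mono {x y : List A} (h : x <:+: y) : palFactors x ⊆ palFactors y := by
  intro u hu
  rw [mem_palFactors] at hu ⊢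
  exact ⟨hu.1, hu.2.trans h⟩

lemma palFactors_reverse (x : List A) : palFactors x.reverse = palFactors x := by
  ext u
  rw [mem_palFactors, mem_palFactors, and_congr_right_iff]
  intro hu
  conv_lhs => rw [← hu]
  exact reverse_infix

lemma mem_palFactors_append_singleton_sdiff {x u : List A} {a : A} :
    u ∈ palFactors (x ++ [a]) \ palFactors x ↔
      u.reverse = u ∧ u <:+ x ++ [a] ∧ ¬ u <:+: x := by
  simp only [Finset.mem_sdiff, mem_palFactors, not_and]
  exact ⟨fun ⟨⟨hu, hinf⟩, hx⟩ =>
      ⟨hu, isSuffix_of_isInfix_append_singleton hinf (hx hu), hx hu⟩,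
    fun ⟨hu, hsuf, hx⟩ => ⟨⟨hu, hsuf.isInfix⟩, fun _ => hx⟩⟩

/-- Of two new palindromic suffixes, the shorter one is a prefix of the longer one, hence
occurred before. -/
lemma card_palFactors_append_singleton_sdiff_le_one (x : List A) (a : A) :
    (palFactors (x ++ [a]) \ palFactors x).card ≤ 1 := by
  rw [Finset.card_le_one]
  intro u hu v hv
  wlog hle : u.length ≤ v.length generalizing u v
  · exact (this v hv u hu (le_of_not_ge hle)).symm
  rw [mem_palFactors_append_singleton_sdiff] at hu hv
  obtain ⟨hu, husuf, hunew⟩ := hu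
  obtain ⟨hv, hvsuf, -⟩ := hv
  have huv : u <:+ v := suffix_of_suffix_length_le husuf hvsuf hle
  refine huv.eq_of_length (le_antisymm hle (not_lt.mp fun hlt => hunew ?_))
  have hpre : u <+: v := by simpa only [hu, hv] using reverse_prefix.mpr huv
  exact isInfix_of_isPrefix_of_isSuffix_append_singleton hpre hlt hvsuf

lemma card_sdiff_add_card_palFactors_append_singleton (x : List A) (a : A) :
    (palFactors (x ++ [a]) \ palFactors x).card + (palFactors x).card =
      (palFactors (x ++ [a])).card :=
  Finset.card_sdiff_add_card_eq_card (palFactors_mono (prefix_append x [a]).isInfix)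

lemma defect_le_defect_append_singleton (x : List A) (a : A) : defect x ≤ defect (x ++ [a]) := by
  have h := card_sdiff_add_card_palFactors_append_singleton x a
  have h1 := card_palFactors_append_singleton_sdiff_le_one x a
  simp only [defect, length_append, length_singleton]
  omega

lemma defect_append_singleton_eq {x s : List A} {a : A} (hs : s.reverse = s)
    (hsuf : s <:+ x ++ [a]) (hnew : ¬ s <:+: x) : defect (x ++ [a]) = defect x := by
  have h := card_sdiff_add_card_palFactors_append_singleton x a
  have h1 := card_palFactors_append_singleton_sdiff_le_one x a
  have h2 : 0 < (palFactors (x ++ [a]) \ palFactors x).card :=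
    Finset.card_pos.mpr ⟨s, mem_palFactors_append_singleton_sdiff.mpr ⟨hs, hsuf, hnew⟩⟩
  simp only [defect, length_append, length_singleton]
  omega

lemma defect_le_defect_append (x t : List A) : defect x ≤ defect (x ++ t) := by
  induction t using reverseRecOn with
  | nil => simp
  | append_singleton t a ih =>
    rw [← append_assoc]
    exact ih.trans (defect_le_defect_append_singleton _ a)

lemma defect_reverse (x : List A) : defect x.reverse = defect x := by
  rw [defect, defect, palFactors_reverse, length_reverse]

lemma defect_le_of_isInfix {u y : List A} (h : u <:+: y) : defect u ≤ defect y := by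
  obtain ⟨s, t, rfl⟩ := h
  calc defect u ≤ defect (u ++ t) := defect_le_defect_append u t
    _ = defect ((u ++ t).reverse) := (defect_reverse _).symm
    _ ≤ defect ((u ++ t).reverse ++ s.reverse) := defect_le_defect_append _ _
    _ = defect (s ++ u ++ t) := by rw [← reverse_append, defect_reverse, append_assoc]

end PalindromicFactors

section FactorAt

def factorAt (f : ℕ → A) (i n : ℕ) : List A := (range n).map (fun k => f (i + k))

variable (f : ℕ → A)

@[simp] lemma length_factorAt (i n : ℕ) : (factorAt f i n).length = n := by
  simp [factorAt]

@[simp] lemma getElem_factorAt {i n k : ℕ} (h : k < (factorAt f i n).length) :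
    (factorAt f i n)[k] = f (i + k) := by
  simp [factorAt]

lemma factorAt_append (i a b : ℕ) :
    factorAt f i a ++ factorAt f (i + a) b = factorAt f i (a + b) := by
  simp only [factorAt, range_add, map_append, map_map]
  congr 1
  exact map_congr_left fun k _ => by simp [Nat.add_assoc]

lemma factorAt_isSuffix (i n : ℕ) : factorAt f i n <:+ factorAt f 0 (i + n) :=
  ⟨factorAt f 0 i, by simpa using factorAt_append f 0 i n⟩

lemma factorAt_isPrefix {a b : ℕ} (h : a ≤ b) : factorAt f 0 a <+: factorAt f 0 b :=
  ⟨factorAt f a (b - a), by simpa [Nat.add_sub_cancel' h] using factorAt_append f 0 a (b - a)⟩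

variable {f}

lemma eq_factorAt_of_isPrefix {u : List A} {n : ℕ} (h : u <+: factorAt f 0 n) :
    u = factorAt f 0 u.length := by
  have hle : u.length ≤ n := by simpa using h.length_le
  exact (prefix_of_prefix_length_le h (factorAt_isPrefix f hle) (by simp)).eq_of_length (by simp)

lemma exists_eq_factorAt_of_isInfix {u : List A} {m : ℕ} (h : u <:+: factorAt f 0 m) :
    ∃ i, i + u.length ≤ m ∧ u = factorAt f i u.length := by
  obtain ⟨s, t, hst⟩ := h
  have hm : s.length + u.length + t.length = m := by simpa [Nat.add_assoc] using congrArg length hst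
  refine ⟨s.length, by omega, ?_⟩
  rw [← hm, ← factorAt_append, ← factorAt_append, zero_add] at hst
  exact (append_inj' (append_inj' hst (by simp)).1 (by simp)).2

lemma factorAt_add_period {n : ℕ} (hf : Periodic f n) (i k : ℕ) :
    factorAt f (i + n) k = factorAt f i k :=
  map_congr_left fun j _ => by rw [Nat.add_right_comm, hf]

end FactorAt

namespace Function.Periodic

variable {f : ℕ → A} {a b : ℕ}

lemma nat_of_add (ha : Periodic f a) (hab : Periodic f (a + b)) : Periodic f b := fun t => by
  rw [← ha, add_assoc, add_comm b, hab]

lemma nat_mod (ha : Periodic f a) (hb : Periodic f b) : Periodic f (b % a) :=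
  (ha.nat_mul (b / a)).nat_of_add (by rwa [Nat.cast_id, Nat.div_add_mod'])

lemma dvd_of_forall_not_periodic_lt (ha : Periodic f a) (h0 : 0 < a)
    (hmin : ∀ d, 0 < d → d < a → ¬ Periodic f d) (hb : Periodic f b) : a ∣ b :=
  Nat.dvd_of_mod_eq_zero <| Nat.eq_zero_of_not_pos fun hpos =>
    hmin _ hpos (Nat.mod_lt b h0) (ha.nat_mod hb)

/-- Every residue class modulo the period `a` meets the window `[j, j + a)`. -/
lemma exists_lt_forall_apply_add_eq (ha : Periodic f a) (h0 : 0 < a) (t j : ℕ) :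
    ∃ k < a, ∀ e, f (t + e) = f (j + k + e) := by
  set s := t + a * j - j
  have hj : j ≤ a * j := Nat.le_mul_of_pos_left j h0
  have hs := Nat.mod_add_div s a
  refine ⟨s % a, Nat.mod_lt s h0, fun e => ?_⟩
  rw [← ha.nat_mul j (t + e), ← ha.nat_mul (s / a) (j + s % a + e)]
  congr 1
  rw [Nat.cast_id, Nat.cast_id, mul_comm j, mul_comm (s / a)]
  omega

lemma apply_eq_of_add_mod_eq (ha : Periodic f a) (h0 : 0 < a)
    (hsymm : ∀ i < a, f i = f (a - 1 - i)) {i j : ℕ} (h : (i + j) % a = a - 1) : f i = f j := by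
  have hi := Nat.mod_lt i h0
  have hj := Nat.mod_lt j h0
  have hsum : i % a + j % a = a - 1 := by
    rw [Nat.add_mod_eq_ite] at h
    split_ifs at h <;> omega
  rw [← ha.map_mod_nat i, ← ha.map_mod_nat j, hsymm _ hi]
  congr 1
  omega

end Function.Periodic

section MinimalPeriod

variable {f : ℕ → A} {L : ℕ}

lemma reverse_factorAt_eq_self {i n : ℕ} (h : ∀ k < n, f (i + k) = f (i + (n - 1 - k))) :
    (factorAt f i n).reverse = factorAt f i n :=
  ext_getElem (by simp) fun k _ hk => by
    simp only [getElem_reverse, getElem_factorAt, length_factorAt]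
    exact (h k (by simpa using hk)).symm

lemma Function.Periodic.nat_of_factorAt_eq (hf : Periodic f L) (h0 : 0 < L) {j d n : ℕ}
    (hn : L ≤ n) (h : factorAt f (j + d) n = factorAt f j n) : Periodic f d := fun t => by
  obtain ⟨k, hk, hke⟩ := hf.exists_lt_forall_apply_add_eq h0 t j
  have hw := getElem_of_eq h (by simp; omega : k < (factorAt f (j + d) n).length)
  rw [getElem_factorAt, getElem_factorAt] at hw
  calc f (t + d) = f (j + k + d) := hke d
    _ = f (j + k) := by rw [Nat.add_right_comm, hw]
    _ = f t := by simpa using (hke 0).symm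

variable [DecidableEq A]

lemma defect_factorAt_succ_eq (hf : Periodic f L) (h0 : 0 < L)
    (hmin : ∀ d, 0 < d → d < L → ¬ Periodic f d) (hsymm : ∀ i < L, f i = f (L - 1 - i))
    {m : ℕ} (hm : 2 * L ≤ m) : defect (factorAt f 0 (m + 1)) = defect (factorAt f 0 m) := by
  have hmL := Nat.mod_lt m h0
  have hdiv := Nat.mod_add_div m L
  set i := L - 1 - m % L
  set n := m + 1 - i
  have hsplit : factorAt f 0 (m + 1) = factorAt f 0 m ++ [f m] := by
    rw [← factorAt_append]
    simp [factorAt]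
  have hpal : (factorAt f i n).reverse = factorAt f i n := by
    refine reverse_factorAt_eq_self fun k hk => hf.apply_eq_of_add_mod_eq h0 hsymm ?_
    rw [show i + k + (i + (n - 1 - k)) = L - 1 + L * (m / L) by omega,
      Nat.add_mul_mod_self_left, Nat.mod_eq_of_lt (by omega)]
  have hsuf : factorAt f i n <:+ factorAt f 0 m ++ [f m] := by
    rw [← hsplit, show m + 1 = i + n by omega]
    exact factorAt_isSuffix f i n
  have hnew : ¬ factorAt f i n <:+: factorAt f 0 m := by
    intro hinf
    obtain ⟨i', hi', heq⟩ := exists_eq_factorAt_of_isInfix hinf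
    simp only [length_factorAt] at hi' heq
    refine hmin (i - i') (by omega) (by omega)
      (hf.nat_of_factorAt_eq (j := i') h0 (by omega : L ≤ n) ?_)
    rw [Nat.add_sub_cancel' (by omega)]
    exact heq
  rw [hsplit]
  exact defect_append_singleton_eq hpal hsuf hnew

lemma defect_le_of_factorOfInf_of_stable {M : ℕ}
    (hM : ∀ m ≥ M, defect (factorAt f 0 (m + 1)) = defect (factorAt f 0 m)) {u : List A}
    (hu : FactorOfInf u f) : defect u ≤ defect (factorAt f 0 M) := by
  have hprefix : ∀ m, defect (factorAt f 0 m) ≤ defect (factorAt f 0 M) := by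
    intro m
    rcases le_total m M with h | h
    · exact defect_le_of_isInfix (factorAt_isPrefix f h).isInfix
    · induction m, h using Nat.le_induction with
      | base => exact le_rfl
      | succ m hm ih => exact (hM m hm).le.trans ih
  obtain ⟨i, hi⟩ := hu
  calc defect u = defect (factorAt f i u.length) := congrArg defect hi
    _ ≤ defect (factorAt f 0 (i + u.length)) :=
      defect_le_of_isInfix (factorAt_isSuffix f i _).isInfix
    _ ≤ defect (factorAt f 0 M) := hprefix _

end MinimalPeriod

section PeriodicWord

variable {p : List A} (hp : p ≠ [])

lemma periodicWord_periodic : Periodic (periodicWord p hp) p.length := fun i => by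
  simp [periodicWord]

lemma periodicWord_of_lt {i : ℕ} (h : i < p.length) : periodicWord p hp i = p[i] := by
  simp [periodicWord, Nat.mod_eq_of_lt h]

lemma factorAt_periodicWord_length : factorAt (periodicWord p hp) 0 p.length = p :=
  ext_getElem (by simp) fun k _ hk => by simp [periodicWord_of_lt hp hk]

lemma factorAt_periodicWord_two_mul :
    factorAt (periodicWord p hp) 0 (2 * p.length) = p ++ p := by
  rw [two_mul, ← factorAt_append, factorAt_add_period (periodicWord_periodic hp),
    factorAt_periodicWord_length]

lemma periodicWord_symm (hpal : p.reverse = p) {L : ℕ} (hL : Periodic (periodicWord p hp) L)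
    (hLp : L ∣ p.length) (i : ℕ) (hi : i < L) :
    periodicWord p hp i = periodicWord p hp (L - 1 - i) := by
  obtain ⟨c, hc⟩ := hLp
  have hN : 0 < L * c := hc ▸ length_pos_iff.mpr hp
  have hLc : L ≤ L * c := Nat.le_mul_of_pos_right L (Nat.pos_of_mul_pos_left hN)
  have hiN : i < p.length := by omega
  have hidx : L - 1 - i + (c - 1) * L = p.length - 1 - i := by
    rw [hc, Nat.sub_one_mul, mul_comm c]
    omega
  rw [← hL.nat_mul (c - 1) (L - 1 - i), Nat.cast_id, hidx, periodicWord_of_lt hp hiN,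
    periodicWord_of_lt hp (by omega), ← getElem_reverse]
  exact getElem_of_eq hpal.symm _

variable [DecidableEq A]

theorem defect_le_of_factorOfInf_periodicWord (hpal : p.reverse = p) {u : List A}
    (hu : FactorOfInf u (periodicWord p hp)) : defect u ≤ defect (p ++ p) := by
  classical
  set f := periodicWord p hp
  have hex : ∃ L, 0 < L ∧ Periodic f L :=
    ⟨p.length, length_pos_iff.mpr hp, periodicWord_periodic hp⟩
  obtain ⟨hL0, hL⟩ := Nat.find_spec hex
  have hmin : ∀ d, 0 < d → d < Nat.find hex → ¬ Periodic f d :=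
    fun d hd hlt hper => Nat.find_min hex hlt ⟨hd, hper⟩
  have hdvd := hL.dvd_of_forall_not_periodic_lt hL0 hmin (periodicWord_periodic hp)
  have hle := Nat.le_of_dvd (length_pos_iff.mpr hp) hdvd
  have hstable : ∀ m ≥ 2 * Nat.find hex,
      defect (factorAt f 0 (m + 1)) = defect (factorAt f 0 m) :=
    fun _ => defect_factorAt_succ_eq hL hL0 hmin (periodicWord_symm hp hpal hL hdvd)
  calc defect u ≤ defect (factorAt f 0 (2 * Nat.find hex)) :=
        defect_le_of_factorOfInf_of_stable hstable hu
    _ ≤ defect (factorAt f 0 (2 * p.length)) :=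
        defect_le_of_isInfix (factorAt_isPrefix f (by omega)).isInfix
    _ = defect (p ++ p) := by rw [factorAt_periodicWord_two_mul]

end PeriodicWord

lemma mem_of_mem_palindrome_of_isPrefix {w p : List A} {x : A} (hpal : p.reverse = p)
    (hpref : w <+: p) (hlen : p.length ≤ 2 * w.length) (hx : x ∈ p) : x ∈ w := by
  obtain ⟨t, rfl⟩ := hpref
  have hw : w.reverse <:+ w ++ t := ⟨t.reverse, by rw [← reverse_append, hpal]⟩
  have ht : t <:+ w.reverse :=
    suffix_of_suffix_length_le (suffix_append w t) hw (by simp at hlen ⊢; omega)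
  rcases mem_append.mp hx with hx | hx
  · exact hx
  · exact mem_reverse.mp (ht.subset hx)

theorem infinite_defect_le_defect_double_closure [DecidableEq A] (w p : List A)
    (hw : w ≠ []) (hpal : p.reverse = p) (hpref : w <+: p)
    (hmin : ∀ q : List A, q.reverse = q → w <+: q → p.length ≤ q.length) :
    ∃ z : ℕ → A, (∀ i, z i ∈ w) ∧ FactorOfInf w z ∧
      ∀ u : List A, FactorOfInf u z → defect u ≤ defect (p ++ p) := by
  have hp : p ≠ [] := by
    rintro rfl
    exact hw (prefix_nil.mp hpref)
  have hlen : p.length ≤ 2 * w.length := by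
    simpa [two_mul] using hmin (w ++ w.reverse) (by simp) (prefix_append w w.reverse)
  refine ⟨periodicWord p hp, fun i => mem_of_mem_palindrome_of_isPrefix hpal hpref hlen
    (get_mem _ _), ⟨0, ?_⟩, fun u => defect_le_of_factorOfInf_periodicWord hp hpal⟩
  rw [← factorAt_periodicWord_length hp] at hpref
  exact eq_factorAt_of_isPrefix hpref
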